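/- arXiv:2501.15323 — 2 statements merged into one kernel-verified Lean document; each statement's English description precedes it below -/
import Mathlib

section
/- Let a, b ≥ 0 be real numbers whose greatest common divisor is less than δ (where gcd(a,b) is the largest real c with a/c, b/c ∈ ℕ, set to 0 if no such c exists). Then for any ω > δ and any x ∈ [0, ω), there exist natural numbers n, m such that the distance from na + mb to x modulo ω is less than δ. Moreover, n and m can be chosen arbitrarily large. -/
/-!
Let `P` be the additive monoid of reals `r a + s b + k ω` with `r, s ∈ ℕ`, `k ∈ ℤ`. By Dirichlet's
approximation theorem some `n a` lies arbitrarily close to `ℤ ω`, so `-a` (and likewise `-b`) is a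
limit of elements of `P`; hence the closure of `P` contains the group generated by `a, b, ω`.
That group is either dense in `ℝ` or cyclic, and in the cyclic case its positive generator is a
common divisor of `a` and `b`, hence smaller than `δ`. Either way `P` contains some `c ∈ (0, δ)`,
and the multiples of `c` shifted by `ℤ ω` and by `N (a + b)` come within `c` of every real.
-/

open Set

theorem exists_nat_mul_eq_of_mem_zmultiples {g x : ℝ} (hg : 0 < g) (hx : 0 ≤ x)
    (hxg : x ∈ AddSubgroup.zmultiples g) : ∃ n : ℕ, x = n * g := by
  obtain ⟨n, rfl⟩ := hxg
  simp only [zsmul_eq_mul] at hx ⊢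
  have hn : (0 : ℝ) ≤ n := nonneg_of_mul_nonneg_left hx hg
  exact ⟨n.toNat, by rw [← Int.cast_natCast, Int.toNat_of_nonneg (by exact_mod_cast hn)]⟩

theorem AddSubgroup.exists_mem_Ioo_of_common_divisors_lt {a b δ : ℝ} (ha : 0 ≤ a) (hb : 0 ≤ b)
    (hδ : 0 < δ)
    (hgcd : ∀ c : ℝ, 0 < c → (∃ n : ℕ, a = n * c) → (∃ m : ℕ, b = m * c) → c < δ)
    {S : AddSubgroup ℝ} (haS : a ∈ S) (hbS : b ∈ S) (hS : S ≠ ⊥) :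
    ∃ c ∈ S, c ∈ Ioo 0 δ := by
  rcases S.dense_or_cyclic with hdense | ⟨g, rfl⟩
  · exact hdense.exists_between hδ
  rw [← AddSubgroup.zmultiples_eq_closure, ← zmultiples_abs] at haS hbS hS ⊢
  have hg : 0 < |g| := abs_pos.2 fun hg ↦ hS (by simp [hg])
  exact ⟨|g|, AddSubgroup.mem_zmultiples _, hg,
    hgcd _ hg (exists_nat_mul_eq_of_mem_zmultiples hg ha haS)
      (exists_nat_mul_eq_of_mem_zmultiples hg hb hbS)⟩

section

variable {P : AddSubmonoid ℝ} {ω : ℝ}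

theorem AddSubmonoid.neg_mem_closure_of_zmultiples_le (hω : ω ≠ 0)
    (hP : (AddSubgroup.zmultiples ω).toAddSubmonoid ≤ P) {α : ℝ} (hα : α ∈ P) :
    -α ∈ _root_.closure (P : Set ℝ) := by
  refine Metric.mem_closure_iff.2 fun ε hε ↦ ?_
  obtain ⟨n, hn⟩ := exists_nat_one_div_lt (div_pos hε (abs_pos.2 hω))
  obtain ⟨k, hk, -, hdir⟩ := Real.exists_nat_abs_mul_sub_round_le (α / ω) n.succ_pos
  -- `k α` is close to a multiple of `ω`, so `(k - 1) α` approximates `-α` modulo `ω`.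
  refine ⟨(k - 1) • α + (-round (k * (α / ω))) • ω,
    P.add_mem (P.nsmul_mem hα _) (hP (AddSubgroup.zsmul_mem_zmultiples _ _)), ?_⟩
  calc dist (-α) ((k - 1) • α + (-round (k * (α / ω))) • ω)
      = |ω| * |k * (α / ω) - round (k * (α / ω))| := by
        rw [Real.dist_eq, ← abs_mul, ← abs_neg, nsmul_eq_mul, zsmul_eq_mul, Nat.cast_pred hk]
        congr 1
        push_cast
        field_simp
        ring
    _ ≤ |ω| * (1 / (n + 1)) := by
        gcongr
        exact hdir.trans (by gcongr; linarith)
    _ < ε := by rwa [lt_div_iff₀' (abs_pos.2 hω)] at hn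

theorem AddSubmonoid.neg_mem_topologicalClosure (hω : ω ≠ 0)
    (hP : (AddSubgroup.zmultiples ω).toAddSubmonoid ≤ P) {α : ℝ}
    (hα : α ∈ P.topologicalClosure) : -α ∈ P.topologicalClosure := by
  have := neg_mem_closure_of_zmultiples_le hω (hP.trans P.le_topologicalClosure) hα
  rwa [P.isClosed_topologicalClosure.closure_eq] at this

theorem AddSubmonoid.addSubgroupClosure_subset_closure (hω : ω ≠ 0)
    (hP : (AddSubgroup.zmultiples ω).toAddSubmonoid ≤ P) :
    (AddSubgroup.closure (P : Set ℝ) : Set ℝ) ⊆ _root_.closure P :=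
  let Q : AddSubgroup ℝ :=
    { P.topologicalClosure with neg_mem' := neg_mem_topologicalClosure hω hP }
  (AddSubgroup.closure_le Q).2 P.le_topologicalClosure

theorem AddSubmonoid.exists_abs_sub_lt {c e : ℝ} (hcP : c ∈ P) (hc : 0 < c) (heP : e ∈ P)
    (he : e < 0) (y : ℝ) : ∃ p ∈ P, |p - y| < c := by
  obtain ⟨k, hk⟩ := Archimedean.arch (-y) (neg_pos.2 he)
  set z := y - k • e
  have hz : 0 ≤ z / c := div_nonneg (by rw [smul_neg] at hk; linarith) hc.le
  refine ⟨⌊z / c⌋₊ • c + k • e, P.add_mem (P.nsmul_mem hcP _) (P.nsmul_mem heP _), ?_⟩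
  have hlow : ⌊z / c⌋₊ * c ≤ z := (le_div_iff₀ hc).1 (Nat.floor_le hz)
  have hupp : z < (⌊z / c⌋₊ + 1) * c := (div_lt_iff₀ hc).1 (Nat.lt_floor_add_one _)
  rw [abs_sub_lt_iff, nsmul_eq_mul]
  constructor <;> linarith

end

/-- Lemma (gcd-dense): if every common "real divisor" `c` of `a` and `b`
(i.e. `a/c, b/c ∈ ℕ`) satisfies `c < δ` (so "gcd(a,b) < δ"), then for
any `ω > δ` and `x ∈ [0, ω)` there are arbitrarily large `n, m ∈ ℕ`
with `n*a + m*b` within `δ` of `x` modulo `ω`. -/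
theorem gcd_dense (a b δ : ℝ) (ha : 0 ≤ a) (hb : 0 ≤ b) (hδ : 0 < δ)
    (hgcd : ∀ c : ℝ, 0 < c → (∃ n : ℕ, a = n * c) → (∃ m : ℕ, b = m * c) → c < δ) :
    ∀ ω : ℝ, δ < ω → ∀ x ∈ Set.Ico (0 : ℝ) ω, ∀ N : ℕ,
      ∃ n m : ℕ, N ≤ n ∧ N ≤ m ∧ ∃ k : ℤ, |n * a + m * b - x - k * ω| < δ := by
  intro ω hδω x _ N
  have hω : 0 < ω := hδ.trans hδω
  set P := AddSubmonoid.closure {a, b} ⊔ (AddSubgroup.zmultiples ω).toAddSubmonoid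
  have habP : AddSubmonoid.closure {a, b} ≤ P := le_sup_left
  have hωP : (AddSubgroup.zmultiples ω).toAddSubmonoid ≤ P := le_sup_right
  have hPS : ∀ y ∈ P, y ∈ AddSubgroup.closure (P : Set ℝ) := fun _ hy ↦ AddSubgroup.subset_closure hy
  have hωS := hPS ω (hωP (AddSubgroup.mem_zmultiples ω))
  obtain ⟨c₀, hc₀S, hc₀⟩ := AddSubgroup.exists_mem_Ioo_of_common_divisors_lt ha hb hδ hgcd
    (hPS a (habP (AddSubmonoid.subset_closure (by simp))))
    (hPS b (habP (AddSubmonoid.subset_closure (by simp))))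
    (fun h ↦ hω.ne' (by simpa [h] using hωS))
  obtain ⟨c, hc, hcP⟩ :=
    mem_closure_iff.1 (P.addSubgroupClosure_subset_closure hω.ne' hωP hc₀S) _ isOpen_Ioo hc₀
  obtain ⟨p, hpP, hp⟩ := P.exists_abs_sub_lt hcP hc.1
    (hωP (AddSubgroup.neg_mem _ (AddSubgroup.mem_zmultiples ω))) (neg_neg_of_pos hω)
    (x - N * a - N * b)
  obtain ⟨_, hrs, _, ⟨k, rfl⟩, rfl⟩ := AddSubmonoid.mem_sup.1 hpP
  obtain ⟨r, s, rfl⟩ := (AddSubmonoid.mem_closure_pair _ _ _).1 hrs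
  refine ⟨N + r, N + s, by omega, by omega, -k, (Eq.trans_lt ?_ hp).trans hc.2⟩
  push_cast [nsmul_eq_mul, zsmul_eq_mul]
  congr 1
  ring
end

section
/- Let X be a shift space with a synchronizing word v. For any word w such that vwv belongs to the language of X, the bi-infinite periodic sequence obtained by repeating vw is an element of X. -/
/-- The language of a shift space `X ⊆ A^ℤ`: finite words appearing in points of `X`. -/
def shiftLanguage {A : Type*} (X : Set (ℤ → A)) : Set (List A) :=
  {w | ∃ x ∈ X, ∃ i : ℤ, ∀ j : Fin w.length, x (i + j) = w.get j}

/-- A word `v` is synchronizing: `uv ∈ 𝓛` and `vw ∈ 𝓛` imply `uvw ∈ 𝓛`. -/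
def IsSynchronizing {A : Type*} (X : Set (ℤ → A)) (v : List A) : Prop :=
  ∀ u w : List A, (u ++ v) ∈ shiftLanguage X → (v ++ w) ∈ shiftLanguage X →
    (u ++ v ++ w) ∈ shiftLanguage X

/-!
The synchronizing word lets the copies of `vw` be glued one after another: by induction
`(vw)ᵏv ∈ 𝓛` for every `k`. Every finite window of the periodic point is a factor of some
`(vw)ᵏ`, hence lies in `𝓛`, and a point of `A^ℤ` all of whose windows lie in the language of
the closed, shift-invariant set `X` belongs to `X`: each window is realised by a point of `X`
at the right position, and these points converge to it.
-/

theorem List.getElem_flatten_replicate {α : Type*} (l : List α) :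
    ∀ (k j : ℕ) (hj : j < ((List.replicate k l).flatten).length),
      ((List.replicate k l).flatten)[j] =
        l[j % l.length]'(Nat.mod_lt _ (Nat.pos_of_ne_zero fun h => by simp [h] at hj)) := by
  intro k
  induction k with
  | zero => simp
  | succ k ih =>
    intro j hj
    simp only [List.replicate_succ, List.flatten_cons]
    by_cases hjl : j < l.length
    · rw [List.getElem_append_left hjl]
      simp only [Nat.mod_eq_of_lt hjl]
    · push Not at hjl
      rw [List.getElem_append_right hjl, ih]
      simp only [Nat.mod_eq_sub_mod hjl]

theorem IsClosed.mem_of_forall_finset_eqOn {ι A : Type*} [TopologicalSpace A]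
    [DiscreteTopology A] {X : Set (ι → A)} (hX : IsClosed X) {x : ι → A}
    (h : ∀ s : Finset ι, ∃ y ∈ X, Set.EqOn y x s) : x ∈ X := by
  choose y hyX hy using h
  refine hX.mem_of_tendsto (f := y) (b := Filter.atTop) ?_ (.of_forall hyX)
  refine tendsto_pi_nhds.2 fun i => ?_
  rw [nhds_discrete, Filter.tendsto_pure]
  filter_upwards [Filter.eventually_ge_atTop {i}] with s hs
  exact hy s (hs (Finset.mem_singleton_self i))

def window {A : Type*} (x : ℤ → A) (i : ℤ) (n : ℕ) : List A :=
  List.ofFn fun j : Fin n => x (i + j)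

def periodicPoint {A : Type*} (p : List A) (d : A) : ℤ → A :=
  fun n => p.getD (n % (p.length : ℤ)).toNat d

section ShiftSpace

variable {A : Type*} {X : Set (ℤ → A)}

theorem mem_shiftLanguage_of_infix {u w : List A} (huw : u <:+: w)
    (hw : w ∈ shiftLanguage X) : u ∈ shiftLanguage X := by
  obtain ⟨s, t, rfl⟩ := huw
  obtain ⟨x, hx, i, hi⟩ := hw
  refine ⟨x, hx, i + s.length, fun j => ?_⟩
  have := hi ⟨s.length + j, by simp; omega⟩
  simp only [List.get_eq_getElem, List.append_assoc] at this ⊢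
  rw [List.getElem_append_right (by simp), List.getElem_append_left (by simp)] at this
  simpa [add_assoc] using this

theorem IsSynchronizing.flatten_replicate_append_mem {v w : List A}
    (hsync : IsSynchronizing X v) (hw : v ++ w ++ v ∈ shiftLanguage X) (k : ℕ) :
    (List.replicate k (v ++ w)).flatten ++ v ∈ shiftLanguage X := by
  induction k with
  | zero => exact mem_shiftLanguage_of_infix ⟨[], w ++ v, by simp⟩ hw
  | succ k ih =>
    have hwv : v ++ (w ++ v) ∈ shiftLanguage X := by simpa [List.append_assoc] using hw
    simpa [List.replicate_succ', List.append_assoc] using hsync _ _ ih hwv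

theorem shift_mem (hinv : ∀ x, x ∈ X ↔ (fun n => x (n + 1)) ∈ X) (t : ℤ) :
    ∀ x ∈ X, (fun n => x (n + t)) ∈ X := by
  induction t using Int.induction_on with
  | zero => simp
  | succ t ih =>
    intro x hx
    convert (hinv _).1 (ih x hx) using 3
    ring
  | pred t ih =>
    intro x hx
    refine (hinv _).2 ?_
    simpa [add_assoc] using ih x hx

theorem exists_mem_agree_of_window_mem (hinv : ∀ x, x ∈ X ↔ (fun n => x (n + 1)) ∈ X)
    {x : ℤ → A} {i : ℤ} {n : ℕ} (h : window x i n ∈ shiftLanguage X) :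
    ∃ y ∈ X, ∀ j < n, y (i + j) = x (i + j) := by
  obtain ⟨z, hz, k, hk⟩ := h
  refine ⟨fun m => z (m + (k - i)), shift_mem hinv _ z hz, fun j hj => ?_⟩
  have := hk ⟨j, by simpa [window] using hj⟩
  simp only [window, List.get_eq_getElem, List.getElem_ofFn] at this
  rw [← this]
  ring_nf

theorem mem_of_forall_window_mem [TopologicalSpace A] [DiscreteTopology A] (hX : IsClosed X)
    (hinv : ∀ x, x ∈ X ↔ (fun n => x (n + 1)) ∈ X) {x : ℤ → A}
    (h : ∀ i n, window x i n ∈ shiftLanguage X) : x ∈ X := by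
  refine hX.mem_of_forall_finset_eqOn fun s => ?_
  set N := s.sup Int.natAbs
  obtain ⟨y, hy, hyx⟩ := exists_mem_agree_of_window_mem hinv (h (-N) (2 * N + 1))
  refine ⟨y, hy, fun m hm => ?_⟩
  have hmN : m.natAbs ≤ N := Finset.le_sup (f := Int.natAbs) hm
  have := hyx (m + N).toNat (by omega)
  rwa [show -(N : ℤ) + (m + N).toNat = m by omega] at this

end ShiftSpace

theorem window_periodicPoint_infix {A : Type*} {p : List A} (hp : p ≠ []) (d : A) (i : ℤ)
    (n : ℕ) : ∃ k, window (periodicPoint p d) i n <:+: (List.replicate k p).flatten := by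
  have hL : 0 < p.length := List.length_pos_iff.2 hp
  set s := (i % (p.length : ℤ)).toNat
  have hs : (s : ℤ) = i % p.length := Int.toNat_of_nonneg (Int.emod_nonneg _ (by omega))
  have heq : window (periodicPoint p d) i n =
      (((List.replicate (s + n) p).flatten).drop s).take n := by
    have hlen : s + n ≤ (s + n) * p.length := Nat.le_mul_of_pos_right _ hL
    refine List.ext_getElem (by simp [window]; omega) fun j hj _ => ?_
    have hmod : (((i + j) % p.length).toNat : ℤ) = ((s + j) % p.length : ℕ) := by
      push_cast
      rw [hs, Int.emod_add_emod, Int.toNat_of_nonneg (Int.emod_nonneg _ (by omega))]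
    simp only [window, periodicPoint, List.getElem_ofFn, List.getElem_take, List.getElem_drop,
      List.getElem_flatten_replicate]
    simp only [show ((i + j) % p.length).toNat = (s + j) % p.length by omega]
    rw [List.getD_eq_getElem _ _ (Nat.mod_lt _ hL)]
  exact ⟨s + n, heq ▸ (List.take_prefix n _).isInfix.trans (List.drop_suffix s _).isInfix⟩

theorem synchronizing_periodic_point_general {A : Type*} [Inhabited A]
    [TopologicalSpace A] [DiscreteTopology A]
    (X : Set (ℤ → A)) (hX : IsClosed X)
    (hinv : ∀ x, x ∈ X ↔ (fun n => x (n + 1)) ∈ X)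
    (v : List A) (hv : v ≠ []) (hsync : IsSynchronizing X v)
    (w : List A) (hw : v ++ w ++ v ∈ shiftLanguage X) :
    (fun n : ℤ => (v ++ w).getD (n % ((v ++ w).length : ℤ)).toNat default) ∈ X := by
  change periodicPoint (v ++ w) default ∈ X
  refine mem_of_forall_window_mem hX hinv fun i n => ?_
  obtain ⟨k, hk⟩ := window_periodicPoint_infix (p := v ++ w) (by simp [hv]) default i n
  exact mem_shiftLanguage_of_infix (hk.trans (List.prefix_append _ _).isInfix)
    (hsync.flatten_replicate_append_mem hw k)

/-- If `v` is synchronizing and `vwv ∈ 𝓛`, then the bi-infinite repetition of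
`vw` is a point of `X`. -/
theorem synchronizing_periodic_point {A : Type*} [Inhabited A]
    [TopologicalSpace A] [DiscreteTopology A] [Finite A]
    (X : Set (ℤ → A)) (hX : IsClosed X)
    (hinv : ∀ x, x ∈ X ↔ (fun n => x (n + 1)) ∈ X)
    (v : List A) (hv : v ≠ []) (hsync : IsSynchronizing X v)
    (w : List A) (hw : v ++ w ++ v ∈ shiftLanguage X) :
    (fun n : ℤ => (v ++ w).getD (n % ((v ++ w).length : ℤ)).toNat default) ∈ X :=
  synchronizing_periodic_point_general X hX hinv v hv hsync w hw
end
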